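/- For M > 0 and n ∈ ℕ ∪ {0}, the pair Φ⁽¹⁾(ρ) = (cos ρ)^M (1 + sin ρ)^{1/2} P_n^{(−1/2 + M, 1/2 + M)}(sin ρ), Φ⁽²⁾(ρ) = (cos ρ)^M (1 − sin ρ)^{1/2} P_n^{(1/2 + M, −1/2 + M)}(sin ρ) satisfies the spatial Dirac system dΦ⁽¹⁾/dρ + M sec ρ Φ⁽¹⁾ = ω Φ⁽²⁾ and −dΦ⁽²⁾/dρ + M sec ρ Φ⁽²⁾ = ω Φ⁽¹⁾ with ω = 1/2 + M + n, on (−π/2, π/2). -/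

import Mathlib

open Real Set

/-- Pochhammer symbol (x)_k = x(x+1)⋯(x+k−1). -/
noncomputable def poch (x : ℝ) (k : ℕ) : ℝ := ∏ i ∈ Finset.range k, (x + i)

/-- Jacobi polynomial P_n^{(a,b)}(x). -/
noncomputable def jacobiP (n : ℕ) (a b : ℝ) (x : ℝ) : ℝ :=
  (Real.Gamma (n + a + 1) / (n.factorial * Real.Gamma (a + 1))) *
    ∑ k ∈ Finset.range (n + 1),
      (poch (n + a + b + 1) k * poch (-(n : ℝ)) k / (poch (a + 1) k * k.factorial)) *
        ((1 - x) / 2) ^ k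

/-- First component of the Dirichlet type I mode. -/
noncomputable def PhiI1 (M : ℝ) (n : ℕ) (ρ : ℝ) : ℝ :=
  Real.cos ρ ^ M * Real.sqrt (1 + Real.sin ρ) * jacobiP n (M - 1/2) (M + 1/2) (Real.sin ρ)

/-- Second component of the Dirichlet type I mode. -/
noncomputable def PhiI2 (M : ℝ) (n : ℕ) (ρ : ℝ) : ℝ :=
  Real.cos ρ ^ M * Real.sqrt (1 - Real.sin ρ) * jacobiP n (M + 1/2) (M - 1/2) (Real.sin ρ)

/-! The weight `cos ρ ^ M` has logarithmic derivative `-M tan ρ`, which turns `M sec ρ` into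
`M (1 ∓ sin ρ) / cos ρ`; writing `cos ρ = √(1 + sin ρ) √(1 - sin ρ)`, the two Dirac
equations become, for `a = M - 1/2` and `x = sin ρ`, the Jacobi identities
`(1 + x) d/dx P_n^{(a,a+1)} = (n + a + 1) P_n^{(a+1,a)} - (a + 1) P_n^{(a,a+1)}` and
`(1 - x) d/dx P_n^{(a+1,a)} = (a + 1) P_n^{(a+1,a)} - (n + a + 1) P_n^{(a,a+1)}`.
Both are checked coefficientwise on the hypergeometric series in `(1 - x) / 2`, the first after
an index shift that uses the termination of the series at `k = n`. -/

open Finset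

lemma poch_succ (x : ℝ) (k : ℕ) : poch x (k + 1) = poch x k * (x + k) :=
  prod_range_succ _ _

lemma poch_pos {x : ℝ} (hx : 0 < x) (k : ℕ) : 0 < poch x k :=
  prod_pos fun _ _ => by positivity

lemma poch_neg_nat_succ (n : ℕ) : poch (-(n : ℝ)) (n + 1) = 0 :=
  prod_eq_zero (self_mem_range_succ n) (by simp)

lemma poch_add_one_mul (x : ℝ) (k : ℕ) : poch (x + 1) k * x = poch x k * (x + k) := by
  induction k with
  | zero => simp [poch]
  | succ k ih =>
    rw [poch_succ, poch_succ]
    push_cast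
    linear_combination (x + 1 + k) * ih

noncomputable def jacobiCoeff (n : ℕ) (a b : ℝ) (k : ℕ) : ℝ :=
  (Gamma (n + a + 1) / (n.factorial * Gamma (a + 1))) *
    (poch (n + a + b + 1) k * poch (-(n : ℝ)) k / (poch (a + 1) k * k.factorial))

lemma jacobiP_eq_sum (n : ℕ) (a b x : ℝ) :
    jacobiP n a b x = ∑ k ∈ range (n + 1), jacobiCoeff n a b k * ((1 - x) / 2) ^ k := by
  rw [jacobiP, mul_sum]
  exact sum_congr rfl fun k _ => by rw [jacobiCoeff]; ring

lemma jacobiCoeff_self_add_one (n : ℕ) (a b : ℝ) : jacobiCoeff n a b (n + 1) = 0 := by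
  simp [jacobiCoeff, poch_neg_nat_succ]

lemma succ_mul_jacobiCoeff_succ {a : ℝ} (ha : -1 < a) (n : ℕ) (b : ℝ) (k : ℕ) :
    ((k : ℝ) + 1) * jacobiCoeff n a b (k + 1) * (a + 1 + k)
      = (n + a + b + 1 + k) * (k - n) * jacobiCoeff n a b k := by
  have hp : poch (a + 1) k ≠ 0 := (poch_pos (by linarith) k).ne'
  have hak : a + 1 + (k : ℝ) ≠ 0 := by have := k.cast_nonneg (α := ℝ); linarith
  have hk : (k.factorial : ℝ) ≠ 0 := by positivity
  rw [jacobiCoeff, jacobiCoeff, poch_succ, poch_succ, poch_succ, Nat.factorial_succ]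
  push_cast
  field_simp
  ring

lemma jacobiCoeff_add_one_mul {a : ℝ} (ha : -1 < a) (n : ℕ) (b : ℝ) (k : ℕ) :
    jacobiCoeff n (a + 1) b k * (a + 1 + k) = (n + a + 1) * jacobiCoeff n a (b + 1) k := by
  have ha1 : 0 < a + 1 := by linarith
  have hna : 0 < (n : ℝ) + a + 1 := by have := n.cast_nonneg (α := ℝ); linarith
  have hG : Gamma (a + 1) ≠ 0 := (Gamma_pos_of_pos ha1).ne'
  have hp : poch (a + 1) k ≠ 0 := (poch_pos ha1 k).ne'
  have hp' : poch (a + 1 + 1) k ≠ 0 := (poch_pos (by linarith) k).ne'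
  have hk : (k.factorial : ℝ) ≠ 0 := by positivity
  have hn : (n.factorial : ℝ) ≠ 0 := by positivity
  rw [jacobiCoeff, jacobiCoeff, show (n : ℝ) + (a + 1) + 1 = n + a + 1 + 1 by ring,
    Gamma_add_one hna.ne', Gamma_add_one ha1.ne',
    show (n : ℝ) + (a + 1) + b + 1 = n + a + (b + 1) + 1 by ring]
  field_simp
  linear_combination (-(poch (n + a + (b + 1) + 1) k * poch (-(n : ℝ)) k)) *
    poch_add_one_mul (a + 1) k

lemma succ_mul_jacobiCoeff_succ_eq_sub {a : ℝ} (ha : -1 < a) (n k : ℕ) :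
    ((k : ℝ) + 1) * jacobiCoeff n a (a + 1) (k + 1)
      = (k + a + 1) * jacobiCoeff n a (a + 1) k - (n + a + 1) * jacobiCoeff n (a + 1) a k := by
  have hk : a + 1 + (k : ℝ) ≠ 0 := by have := k.cast_nonneg (α := ℝ); linarith
  apply mul_right_cancel₀ hk
  linear_combination
    succ_mul_jacobiCoeff_succ ha n (a + 1) k + (n + a + 1) * jacobiCoeff_add_one_mul ha n a k

lemma mul_sum_natCast_mul_pow_pred (c : ℕ → ℝ) (N : ℕ) (t : ℝ) :
    t * ∑ k ∈ range N, k * c k * t ^ (k - 1) = ∑ k ∈ range N, k * c k * t ^ k := by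
  rw [mul_sum]
  refine sum_congr rfl fun k _ => ?_
  cases k with
  | zero => simp
  | succ j => rw [Nat.add_sub_cancel, pow_succ]; ring

lemma sum_natCast_mul_pow_pred_eq (c : ℕ → ℝ) (N : ℕ) (hc : c (N + 1) = 0) (t : ℝ) :
    ∑ k ∈ range (N + 1), k * c k * t ^ (k - 1)
      = ∑ k ∈ range (N + 1), (k + 1) * c (k + 1) * t ^ k := by
  rw [sum_range_succ', sum_range_succ, hc]
  simp

noncomputable def jacobiDeriv (n : ℕ) (a b x : ℝ) : ℝ :=
  -(1 / 2) * ∑ k ∈ range (n + 1), k * jacobiCoeff n a b k * ((1 - x) / 2) ^ (k - 1)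

lemma hasDerivAt_jacobiP (n : ℕ) (a b x : ℝ) :
    HasDerivAt (jacobiP n a b) (jacobiDeriv n a b x) x := by
  have ht : HasDerivAt (fun y : ℝ => (1 - y) / 2) (-(1 / 2)) x :=
    (((hasDerivAt_id x).const_sub 1).div_const 2).congr_deriv (by norm_num)
  rw [funext (jacobiP_eq_sum n a b), jacobiDeriv, mul_sum]
  refine HasDerivAt.fun_sum fun k _ => ?_
  exact ((ht.fun_pow k).const_mul (jacobiCoeff n a b k)).congr_deriv (by ring)

lemma one_add_mul_jacobiDeriv {a : ℝ} (ha : -1 < a) (n : ℕ) (x : ℝ) :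
    (1 + x) * jacobiDeriv n a (a + 1) x
      = (n + a + 1) * jacobiP n (a + 1) a x - (a + 1) * jacobiP n a (a + 1) x := by
  rw [jacobiDeriv, jacobiP_eq_sum, jacobiP_eq_sum]
  set t := (1 - x) / 2
  rw [show 1 + x = 2 * (1 - t) by ring,
    show 2 * (1 - t) *
        (-(1 / 2) * ∑ k ∈ range (n + 1), k * jacobiCoeff n a (a + 1) k * t ^ (k - 1))
      = t * ∑ k ∈ range (n + 1), k * jacobiCoeff n a (a + 1) k * t ^ (k - 1)
        - ∑ k ∈ range (n + 1), k * jacobiCoeff n a (a + 1) k * t ^ (k - 1) by ring,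
    mul_sum_natCast_mul_pow_pred,
    sum_natCast_mul_pow_pred_eq _ n (jacobiCoeff_self_add_one n a (a + 1)),
    mul_sum, mul_sum, ← sum_sub_distrib, ← sum_sub_distrib]
  refine sum_congr rfl fun k _ => ?_
  linear_combination (-(t ^ k)) * succ_mul_jacobiCoeff_succ_eq_sub ha n k

lemma one_sub_mul_jacobiDeriv {a : ℝ} (ha : -1 < a) (n : ℕ) (x : ℝ) :
    (1 - x) * jacobiDeriv n (a + 1) a x
      = (a + 1) * jacobiP n (a + 1) a x - (n + a + 1) * jacobiP n a (a + 1) x := by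
  rw [jacobiDeriv, jacobiP_eq_sum, jacobiP_eq_sum]
  set t := (1 - x) / 2
  rw [show 1 - x = 2 * t by ring,
    show 2 * t * (-(1 / 2) * ∑ k ∈ range (n + 1), k * jacobiCoeff n (a + 1) a k * t ^ (k - 1))
      = -(t * ∑ k ∈ range (n + 1), k * jacobiCoeff n (a + 1) a k * t ^ (k - 1)) by ring,
    mul_sum_natCast_mul_pow_pred, mul_sum, mul_sum, ← sum_sub_distrib, ← sum_neg_distrib]
  refine sum_congr rfl fun k _ => ?_
  linear_combination (-(t ^ k)) * jacobiCoeff_add_one_mul ha n a k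

lemma one_add_sin_pos {ρ : ℝ} (hc : 0 < cos ρ) : 0 < 1 + sin ρ := by
  nlinarith [sin_sq_add_cos_sq ρ, neg_one_le_sin ρ, sin_le_one ρ]

lemma one_sub_sin_pos {ρ : ℝ} (hc : 0 < cos ρ) : 0 < 1 - sin ρ := by
  nlinarith [sin_sq_add_cos_sq ρ, neg_one_le_sin ρ, sin_le_one ρ]

lemma cos_eq_sqrt_one_add_sin_mul_sqrt_one_sub_sin {ρ : ℝ} (hc : 0 ≤ cos ρ) :
    cos ρ = √(1 + sin ρ) * √(1 - sin ρ) := by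
  rw [← sqrt_mul (by linarith [neg_one_le_sin ρ]),
    show (1 + sin ρ) * (1 - sin ρ) = cos ρ ^ 2 by linear_combination -sin_sq_add_cos_sq ρ,
    sqrt_sq hc]

lemma hasDerivAt_cos_rpow_mul {M ρ F' : ℝ} {F : ℝ → ℝ} (hc : 0 < cos ρ)
    (hF : HasDerivAt F F' ρ) :
    HasDerivAt (fun y => cos y ^ M * F y) (cos ρ ^ M * (F' - M * sin ρ / cos ρ * F ρ)) ρ :=
  (((hasDerivAt_cos ρ).rpow_const (Or.inl hc.ne')).mul hF).congr_deriv <| by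
    rw [rpow_sub_one hc.ne']
    ring

lemma hasDerivAt_sqrt_one_add_sin_mul_comp {g : ℝ → ℝ} {g' ρ : ℝ} (hc : 0 < cos ρ)
    (hg : HasDerivAt g g' (sin ρ)) :
    HasDerivAt (fun y => √(1 + sin y) * g (sin y))
      (√(1 - sin ρ) * (g (sin ρ) / 2 + (1 + sin ρ) * g')) ρ := by
  have hs := one_add_sin_pos hc
  refine ((((hasDerivAt_sin ρ).const_add 1).sqrt hs.ne').mul
    (hg.comp ρ (hasDerivAt_sin ρ))).congr_deriv ?_
  rw [Function.comp_apply, cos_eq_sqrt_one_add_sin_mul_sqrt_one_sub_sin hc.le]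
  field_simp
  linear_combination (2 * √(1 - sin ρ) * g') * sq_sqrt hs.le

lemma hasDerivAt_sqrt_one_sub_sin_mul_comp {g : ℝ → ℝ} {g' ρ : ℝ} (hc : 0 < cos ρ)
    (hg : HasDerivAt g g' (sin ρ)) :
    HasDerivAt (fun y => √(1 - sin y) * g (sin y))
      (-√(1 + sin ρ) * (g (sin ρ) / 2 - (1 - sin ρ) * g')) ρ := by
  have hs := one_sub_sin_pos hc
  refine ((((hasDerivAt_sin ρ).const_sub 1).sqrt hs.ne').mul
    (hg.comp ρ (hasDerivAt_sin ρ))).congr_deriv ?_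
  rw [Function.comp_apply, cos_eq_sqrt_one_add_sin_mul_sqrt_one_sub_sin hc.le]
  field_simp
  linear_combination (2 * √(1 + sin ρ) * g') * sq_sqrt hs.le

lemma PhiI1_dirac {M : ℝ} (hM : -(1 / 2) < M) (n : ℕ) {ρ : ℝ} (hc : 0 < cos ρ) :
    deriv (PhiI1 M n) ρ + M * (cos ρ)⁻¹ * PhiI1 M n ρ = (1 / 2 + M + n) * PhiI2 M n ρ := by
  have ha : -1 < M - 1 / 2 := by linarith
  have hPhi : PhiI1 M n
      = fun y => cos y ^ M * (√(1 + sin y) * jacobiP n (M - 1 / 2) (M - 1 / 2 + 1) (sin y)) := by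
    funext y
    rw [PhiI1, mul_assoc, show M + 1 / 2 = M - 1 / 2 + 1 by ring]
  rw [hPhi, (hasDerivAt_cos_rpow_mul hc
    (hasDerivAt_sqrt_one_add_sin_mul_comp hc (hasDerivAt_jacobiP _ _ _ _))).deriv, PhiI2,
    show M + 1 / 2 = M - 1 / 2 + 1 by ring]
  beta_reduce
  have key := one_add_mul_jacobiDeriv ha n (sin ρ)
  have hv : 0 < √(1 - sin ρ) := sqrt_pos.mpr (one_sub_sin_pos hc)
  have hu : 0 < √(1 + sin ρ) := sqrt_pos.mpr (one_add_sin_pos hc)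
  have hv2 := sq_sqrt (one_sub_sin_pos hc).le
  set P := jacobiP n (M - 1 / 2) (M - 1 / 2 + 1) (sin ρ)
  set Q := jacobiP n (M - 1 / 2 + 1) (M - 1 / 2) (sin ρ)
  set D := jacobiDeriv n (M - 1 / 2) (M - 1 / 2 + 1) (sin ρ)
  set A := cos ρ ^ M
  rw [cos_eq_sqrt_one_add_sin_mul_sqrt_one_sub_sin hc.le]
  field_simp
  linear_combination 2 * A * √(1 - sin ρ) ^ 2 * key - 2 * A * M * P * hv2

lemma PhiI2_dirac {M : ℝ} (hM : -(1 / 2) < M) (n : ℕ) {ρ : ℝ} (hc : 0 < cos ρ) :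
    -deriv (PhiI2 M n) ρ + M * (cos ρ)⁻¹ * PhiI2 M n ρ = (1 / 2 + M + n) * PhiI1 M n ρ := by
  have ha : -1 < M - 1 / 2 := by linarith
  have hPhi : PhiI2 M n
      = fun y => cos y ^ M * (√(1 - sin y) * jacobiP n (M - 1 / 2 + 1) (M - 1 / 2) (sin y)) := by
    funext y
    rw [PhiI2, mul_assoc, show M + 1 / 2 = M - 1 / 2 + 1 by ring]
  rw [hPhi, (hasDerivAt_cos_rpow_mul hc
    (hasDerivAt_sqrt_one_sub_sin_mul_comp hc (hasDerivAt_jacobiP _ _ _ _))).deriv, PhiI1,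
    show M + 1 / 2 = M - 1 / 2 + 1 by ring]
  beta_reduce
  have key := one_sub_mul_jacobiDeriv ha n (sin ρ)
  have hv : 0 < √(1 - sin ρ) := sqrt_pos.mpr (one_sub_sin_pos hc)
  have hu : 0 < √(1 + sin ρ) := sqrt_pos.mpr (one_add_sin_pos hc)
  have hu2 := sq_sqrt (one_add_sin_pos hc).le
  set P := jacobiP n (M - 1 / 2) (M - 1 / 2 + 1) (sin ρ)
  set Q := jacobiP n (M - 1 / 2 + 1) (M - 1 / 2) (sin ρ)
  set D := jacobiDeriv n (M - 1 / 2 + 1) (M - 1 / 2) (sin ρ)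
  set A := cos ρ ^ M
  rw [cos_eq_sqrt_one_add_sin_mul_sqrt_one_sub_sin hc.le]
  field_simp
  linear_combination -2 * A * √(1 + sin ρ) ^ 2 * key - 2 * A * M * Q * hu2

/-- For M > 0, the Dirichlet type I mode pair satisfies the spatial Dirac system
with ω = 1/2 + M + n on (−π/2, π/2). -/
theorem stmt14 (M : ℝ) (hM : 0 < M) (n : ℕ) :
    (∀ ρ ∈ Ioo (-(π/2)) (π/2),
      deriv (PhiI1 M n) ρ + M * (Real.cos ρ)⁻¹ * PhiI1 M n ρ
        = (1/2 + M + n) * PhiI2 M n ρ) ∧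
    (∀ ρ ∈ Ioo (-(π/2)) (π/2),
      -deriv (PhiI2 M n) ρ + M * (Real.cos ρ)⁻¹ * PhiI2 M n ρ
        = (1/2 + M + n) * PhiI1 M n ρ) := by
  have hM' : -(1 / 2) < M := by linarith
  exact ⟨fun ρ hρ => PhiI1_dirac hM' n (cos_pos_of_mem_Ioo hρ),
    fun ρ hρ => PhiI2_dirac hM' n (cos_pos_of_mem_Ioo hρ)⟩
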